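/- Fix λ ∈ ℚ, let K = ℚ(t), and for integers k ≥ 0, s ≥ 0 let F(k,s) ∈ K be the residue (coefficient of Y^{−1}) of N(Y)^k/(Y^{2s}D(Y)), where N(Y) = (1 − λY²/2)(1 − Y²t²) + 4t and D(Y) = e^{Y/2}(1+Yt)² − e^{−Y/2}(1−Yt)². Then for all 0 ≤ k ≤ s, the difference F(k,s) − (−1)^s·2^{3k−2s−2}·t^{k+s−1} is either zero or a rational function of t of total degree strictly less than k + s − 1. -/

import Mathlib

open PowerSeries

/-- `N(Y) = (1 - λY²/2)(1 - Y²t²) + 4t` as a formal power series in `Y` over `K = ℚ(t)`. -/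
noncomputable def Nser (lam : ℚ) : PowerSeries (RatFunc ℚ) :=
  (1 - PowerSeries.C (R := RatFunc ℚ) (algebraMap ℚ (RatFunc ℚ) lam / 2) *
      PowerSeries.X ^ 2) *
    (1 - PowerSeries.C (R := RatFunc ℚ) (RatFunc.X ^ 2) * PowerSeries.X ^ 2) +
  PowerSeries.C (R := RatFunc ℚ) (4 * RatFunc.X)

/-- `D(Y) = e^{Y/2}(1+Yt)² - e^{-Y/2}(1-Yt)²` as a formal power series in `Y` over
`K = ℚ(t)`. -/
noncomputable def DserK : PowerSeries (RatFunc ℚ) :=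
  PowerSeries.rescale (algebraMap ℚ (RatFunc ℚ) (1 / 2))
      (PowerSeries.exp (RatFunc ℚ)) *
      (1 + PowerSeries.C (R := RatFunc ℚ) RatFunc.X * PowerSeries.X) ^ 2 -
    PowerSeries.rescale (algebraMap ℚ (RatFunc ℚ) (-(1 / 2)))
      (PowerSeries.exp (RatFunc ℚ)) *
      (1 - PowerSeries.C (R := RatFunc ℚ) RatFunc.X * PowerSeries.X) ^ 2

/-- `F(k,s)`: the residue (coefficient of `Y⁻¹`) of the formal Laurent series
`N(Y)^k / (Y^{2s} D(Y))` over `K = ℚ(t)`. -/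
noncomputable def Fres (lam : ℚ) (k : ℕ) (s : ℤ) : RatFunc ℚ :=
  ((((Nser lam ^ k : PowerSeries (RatFunc ℚ)) : LaurentSeries (RatFunc ℚ))) /
    (((PowerSeries.X : PowerSeries (RatFunc ℚ)) : LaurentSeries (RatFunc ℚ)) ^ (2 * s) *
      ((DserK : PowerSeries (RatFunc ℚ)) : LaurentSeries (RatFunc ℚ)))).coeff (-1)


/-!
Since `D` is odd and `N` even in `Y`, write `N(Y) = N₂(Y²)` and `D(Y) = Y·E₂(Y²)`; then
`F(k,s)` is the coefficient of `W^s` in `N₂(W)^k / E₂(W)`. Measure the coefficients by the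
valuation at infinity of `ℚ(t)`, giving `W` one unit of `t`-degree. Then the `W^n`-coefficients
of `N₂` and `E₂` have degree at most `n + 1`, and their top-degree parts form
`4t - t²W` and `4t + t²W`, the remainders having degree at most `n`. Such relative
approximations survive products, powers and inverses (the constant terms have exact degree
`1`), so `F(k,s)` agrees up to degree `k + s - 2` with the `W^s`-coefficient of
`(4t - t²W)^k / (4t + t²W)`. Finally `4t - t²W = 8t - (4t + t²W)`, so this quotient is
`(8t)^k / (4t + t²W)` plus a polynomial in `W` of degree `< k`; for `s ≥ k` its
`W^s`-coefficient is therefore `(8t)^k · (-1)^s 4^{-s-1} t^{s-1}`.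
-/

open Finset

namespace PowerSeries

variable {F Γ₀ : Type*} [Field F] [LinearOrderedCommGroupWithZero Γ₀]

/-- With `v` the valuation at infinity on `ℚ(t)`, `γ = exp 1` and `c = exp d`, this says
`deg (coeff n f) ≤ d + n`. -/
def CoeffLE (v : Valuation F Γ₀) (γ c : Γ₀) (f : F⟦X⟧) : Prop :=
  ∀ n, v (coeff n f) ≤ c * γ ^ n

namespace CoeffLE

variable {v : Valuation F Γ₀} {γ c d : Γ₀} {f g : F⟦X⟧}

lemma mono (hf : CoeffLE v γ c f) (hcd : c ≤ d) : CoeffLE v γ d f :=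
  fun n => (hf n).trans (mul_le_mul_left hcd _)

lemma add (hf : CoeffLE v γ c f) (hg : CoeffLE v γ c g) : CoeffLE v γ c (f + g) :=
  fun n => by rw [map_add]; exact v.map_add_le (hf n) (hg n)

lemma neg (hf : CoeffLE v γ c f) : CoeffLE v γ c (-f) :=
  fun n => by rw [map_neg, v.map_neg]; exact hf n

lemma sub (hf : CoeffLE v γ c f) (hg : CoeffLE v γ c g) : CoeffLE v γ c (f - g) := by
  rw [sub_eq_add_neg]; exact hf.add hg.neg

lemma mul (hf : CoeffLE v γ c f) (hg : CoeffLE v γ d g) : CoeffLE v γ (c * d) (f * g) := by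
  intro n
  rw [coeff_mul]
  refine v.map_sum_le fun p hp => ?_
  rw [map_mul, ← mem_antidiagonal.mp hp, pow_add, mul_mul_mul_comm]
  exact mul_le_mul' (hf p.1) (hg p.2)

lemma pow (hf : CoeffLE v γ c f) (n : ℕ) : CoeffLE v γ (c ^ n) (f ^ n) := by
  induction n with
  | zero => intro m; cases m <;> simp [coeff_one]
  | succ n ih => rw [pow_succ, pow_succ]; exact ih.mul hf

lemma inv (hf : CoeffLE v γ c f) (hf₀ : v (constantCoeff f) = c) : CoeffLE v γ c⁻¹ f⁻¹ := by
  intro n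
  induction n using Nat.strong_induction_on with
  | _ n ih =>
    rw [coeff_inv]
    split_ifs with hn
    · simp [hn, hf₀]
    · rw [map_mul, v.map_neg, map_inv₀, hf₀]
      have hsum : v (∑ p ∈ antidiagonal n,
          if p.2 < n then coeff p.1 f * coeff p.2 f⁻¹ else 0) ≤ c * c⁻¹ * γ ^ n := by
        refine v.map_sum_le fun p hp => ?_
        split_ifs with hp₂
        · rw [map_mul, ← mem_antidiagonal.mp hp, pow_add, mul_mul_mul_comm]
          exact mul_le_mul' (hf p.1) (ih p.2 hp₂)
        · simp
      calc c⁻¹ * v _ ≤ c⁻¹ * (c * c⁻¹ * γ ^ n) := mul_le_mul' le_rfl hsum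
        _ = c⁻¹ * γ ^ n := by
          rcases eq_or_ne c 0 with rfl | hc
          · simp
          · rw [mul_inv_cancel₀ hc, one_mul]

end CoeffLE

lemma coeffLE_C_mul_X_pow {v : Valuation F Γ₀} {γ c : Γ₀} {a : F} {m : ℕ}
    (ha : v a ≤ c * γ ^ m) : CoeffLE v γ c (C a * X ^ m) := by
  intro n
  rw [coeff_C_mul_X_pow]
  split_ifs with h
  · rwa [h]
  · simp

lemma coeffLE_rescale_exp [Algebra ℚ F] {v : Valuation F Γ₀}
    (hv : ∀ q : ℚ, v (algebraMap ℚ F q) ≤ 1) (c : ℚ) :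
    CoeffLE v 1 1 (rescale (algebraMap ℚ F c) (exp F)) := by
  intro n
  rw [coeff_rescale, coeff_exp, ← map_pow, ← map_mul, one_pow, mul_one]
  exact hv _

structure CoeffApprox (v : Valuation F Γ₀) (γ c δ : Γ₀) (f g : F⟦X⟧) : Prop where
  left : CoeffLE v γ c f
  right : CoeffLE v γ c g
  sub : CoeffLE v γ (c * δ) (f - g)

namespace CoeffApprox

variable {v : Valuation F Γ₀} {γ c d δ : Γ₀} {f g f' g' : F⟦X⟧}

lemma of_sub (hg : CoeffLE v γ c g) (hfg : CoeffLE v γ (c * δ) (f - g)) (hδ : δ ≤ 1) :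
    CoeffApprox v γ c δ f g where
  left := by simpa using hg.add (hfg.mono (mul_le_of_le_one_right' hδ))
  right := hg
  sub := hfg

lemma mul (hf : CoeffApprox v γ c δ f g) (hf' : CoeffApprox v γ d δ f' g') :
    CoeffApprox v γ (c * d) δ (f * f') (g * g') where
  left := hf.left.mul hf'.left
  right := hf.right.mul hf'.right
  sub := by
    have h₁ : CoeffLE v γ (c * d * δ) (f * (f' - g')) := by
      simpa only [mul_assoc] using hf.left.mul hf'.sub
    have h₂ : CoeffLE v γ (c * d * δ) ((f - g) * g') := by
      simpa only [mul_right_comm c δ d] using hf.sub.mul hf'.right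
    convert h₁.add h₂ using 1
    ring

lemma pow (hf : CoeffApprox v γ c δ f g) (n : ℕ) :
    CoeffApprox v γ (c ^ n) δ (f ^ n) (g ^ n) := by
  induction n with
  | zero =>
    have h₁ : CoeffLE v γ 1 1 := by simpa using hf.left.pow 0
    simp only [pow_zero]
    exact ⟨h₁, h₁, fun m => by simp⟩
  | succ n ih => rw [pow_succ, pow_succ, pow_succ]; exact ih.mul hf

lemma inv (hf : CoeffApprox v γ c δ f g) (hc : c ≠ 0) (hf₀ : v (constantCoeff f) = c)
    (hg₀ : v (constantCoeff g) = c) : CoeffApprox v γ c⁻¹ δ f⁻¹ g⁻¹ where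
  left := hf.left.inv hf₀
  right := hf.right.inv hg₀
  sub := by
    have hf0 : constantCoeff f ≠ 0 := by rw [← v.ne_zero_iff, hf₀]; exact hc
    have hg0 : constantCoeff g ≠ 0 := by rw [← v.ne_zero_iff, hg₀]; exact hc
    have key : f⁻¹ - g⁻¹ = f⁻¹ * (-(f - g)) * g⁻¹ := by
      rw [neg_sub, mul_sub, sub_mul, mul_assoc, PowerSeries.mul_inv_cancel g hg0,
        PowerSeries.inv_mul_cancel f hf0, mul_one, one_mul]
    have h := ((hf.left.inv hf₀).mul hf.sub.neg).mul (hf.right.inv hg₀)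
    rwa [inv_mul_cancel_left₀ hc, mul_comm δ, ← key] at h

end CoeffApprox

lemma coeff_inv_C_add_C_mul_X {a : F} (ha : a ≠ 0) (b : F) (n : ℕ) :
    coeff n (C a + C b * X)⁻¹ = (-b) ^ n / a ^ (n + 1) := by
  have hinv : mk (fun n => (-b) ^ n / a ^ (n + 1)) = (C a + C b * X)⁻¹ := by
    rw [PowerSeries.eq_inv_iff_mul_eq_one (by simpa using ha)]
    ext (_ | n)
    · simp [ha]
    · rw [mul_add, map_add, coeff_mul_C, mul_comm (C b), ← mul_assoc, coeff_mul_C,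
        coeff_succ_mul_X]
      simp only [coeff_mk, coeff_one, Nat.succ_ne_zero, if_false]
      field_simp
      ring
  rw [← hinv, coeff_mk]

lemma coeff_pow_C_add_C_mul_X_of_lt (α β : F) {i n : ℕ} (h : i < n) :
    coeff n ((C α + C β * X) ^ i) = 0 := by
  have hpoly : (C α + C β * X : F⟦X⟧) =
      ((Polynomial.C β * Polynomial.X + Polynomial.C α : Polynomial F) : F⟦X⟧) := by
    simp [add_comm]
  rw [hpoly, ← Polynomial.coe_pow, Polynomial.coeff_coe]
  refine Polynomial.coeff_eq_zero_of_natDegree_lt (Polynomial.natDegree_pow_le.trans_lt ?_)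
  nlinarith [Polynomial.natDegree_linear_le (a := β) (b := α)]

lemma coeff_pow_C_sub_mul_inv {a : F} (ha : a ≠ 0) (b c : F) {k s : ℕ} (hks : k ≤ s) :
    coeff s ((C c - (C a + C b * X)) ^ k * (C a + C b * X)⁻¹) =
      c ^ k * coeff s (C a + C b * X)⁻¹ := by
  set L : F⟦X⟧ := C a + C b * X
  have hL : L * L⁻¹ = 1 := PowerSeries.mul_inv_cancel L (by simpa [L] using ha)
  -- `(c - L) ^ k - c ^ k = -Q * L` with `Q` a polynomial of degree `< k ≤ s`
  have hQ := geom_sum₂_mul (C c - L) (C c) k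
  rw [sub_sub_cancel_left, mul_neg, ← map_pow] at hQ
  set Q := ∑ i ∈ range k, (C c - L) ^ i * C c ^ (k - 1 - i)
  have hQs : coeff s Q = 0 := by
    refine (map_sum _ _ _).trans (sum_eq_zero fun i hi => ?_)
    rw [← map_pow, coeff_mul_C, show C c - L = C (c - a) + C (-b) * X by simp [L]; ring,
      coeff_pow_C_add_C_mul_X_of_lt _ _ ((mem_range.mp hi).trans_le hks), zero_mul]
  rw [show (C c - L) ^ k = C (c ^ k) - Q * L by linear_combination -hQ, sub_mul, mul_assoc, hL,
    mul_one, map_sub, coeff_C_mul, hQs, sub_zero]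

lemma rescale_C {R : Type*} [CommSemiring R] (a b : R) : rescale a (C b) = C b := by
  ext n; cases n <;> simp [coeff_rescale, coeff_C]

lemma coeff_mul_one_add_C_mul_X_sq {R : Type*} [CommRing R] (f : R⟦X⟧) (b : R) (n : ℕ) :
    coeff n (f * (1 + C b * X) ^ 2) = coeff n f +
      2 * b * (if 1 ≤ n then coeff (n - 1) f else 0) +
      b ^ 2 * (if 2 ≤ n then coeff (n - 2) f else 0) := by
  have : f * (1 + C b * X) ^ 2 = f + C (2 * b) * (f * X ^ 1) + C (b ^ 2) * (f * X ^ 2) := by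
    simp only [map_mul, map_pow, map_ofNat]; ring
  rw [this, map_add, map_add, coeff_C_mul, coeff_C_mul, coeff_mul_X_pow', coeff_mul_X_pow']

lemma expand_inv (p : ℕ) (hp : p ≠ 0) {g : F⟦X⟧} (hg : constantCoeff g ≠ 0) :
    expand p hp g⁻¹ = (expand p hp g)⁻¹ := by
  rw [PowerSeries.eq_inv_iff_mul_eq_one (by rwa [constantCoeff_expand]), ← map_mul,
    PowerSeries.inv_mul_cancel g hg, map_one]

lemma coeff_coe_div_X_zpow_mul (f g : F⟦X⟧) (hg : constantCoeff g ≠ 0) (m n : ℕ) :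
    ((f : LaurentSeries F) / (((X : F⟦X⟧) : LaurentSeries F) ^ (m : ℤ) * g)).coeff
      ((n : ℤ) - m) = coeff n (f * g⁻¹) := by
  have hinv : ((g : LaurentSeries F))⁻¹ = ((g⁻¹ : F⟦X⟧) : LaurentSeries F) :=
    inv_eq_of_mul_eq_one_right (by
      rw [← PowerSeries.coe_mul, PowerSeries.mul_inv_cancel g hg, PowerSeries.coe_one])
  have hX : (((X : F⟦X⟧) : LaurentSeries F) ^ (m : ℤ))⁻¹ = HahnSeries.single (-(m : ℤ)) 1 := by
    rw [PowerSeries.coe_X, ← zpow_neg, ← RatFunc.single_zpow]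
  rw [div_eq_mul_inv, mul_inv, hinv, hX, mul_left_comm, ← PowerSeries.coe_mul, sub_eq_add_neg,
    HahnSeries.coeff_single_mul_add, one_mul, LaurentSeries.coeff_coe_powerSeries]

end PowerSeries

lemma RatFunc.eq_zero_or_intDegree_le_of_inftyValuation_le {F : Type*} [Field F]
    [DecidableEq (RatFunc F)] {x : RatFunc F} {d : ℤ}
    (h : inftyValuation F x ≤ WithZero.exp d) : x = 0 ∨ x.intDegree ≤ d := by
  refine or_iff_not_imp_left.mpr fun hx => ?_
  rwa [inftyValuation_apply, inftyValuation_of_nonzero F hx, WithZero.exp_le_exp] at h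

section

-- `RatFunc.inftyValuation` takes a `DecidableEq (RatFunc ℚ)` instance.
open scoped Classical
open WithZero

local notation "K" => RatFunc ℚ
local notation "v∞" => RatFunc.inftyValuation ℚ

lemma WithZero.one_le_exp_one : (1 : ℤᵐ⁰) ≤ exp 1 := by
  rw [← exp_zero, exp_le_exp]; exact zero_le_one

lemma WithZero.exp_neg_one_le_one : exp (-1 : ℤ) ≤ 1 := by
  rw [← exp_zero, exp_le_exp]; exact neg_nonpos.mpr zero_le_one

lemma inftyValuation_algebraMap {q : ℚ} (hq : q ≠ 0) : v∞ (algebraMap ℚ K q) = 1 := by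
  rw [RingHom.ext_rat (algebraMap ℚ K) RatFunc.C, RatFunc.inftyValuation.C _ hq]

lemma inftyValuation_algebraMap_le_one (q : ℚ) : v∞ (algebraMap ℚ K q) ≤ 1 := by
  rcases eq_or_ne q 0 with rfl | hq
  · simp
  · rw [inftyValuation_algebraMap hq]

lemma inftyValuation_four_mul_X : v∞ (4 * RatFunc.X) = exp 1 := by
  rw [map_mul, RatFunc.inftyValuation.X, ← map_ofNat (algebraMap ℚ K) 4,
    inftyValuation_algebraMap (by norm_num), one_mul]

lemma inftyValuation_one_add_four_X : v∞ (1 + 4 * RatFunc.X) = exp 1 := by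
  rw [Valuation.map_add_eq_of_lt_right, inftyValuation_four_mul_X]
  rw [map_one, inftyValuation_four_mul_X, ← exp_zero, exp_lt_exp]; exact zero_lt_one

lemma one_add_four_X_ne_zero : (1 + 4 * RatFunc.X : K) ≠ 0 := by
  rw [← v∞.ne_zero_iff, inftyValuation_one_add_four_X]; exact exp_ne_zero

lemma DserK_eq_rescale_exp_sub : DserK = rescale (algebraMap ℚ K (1 / 2)) (exp K) * (1 + C RatFunc.X * X) ^ 2 -
    rescale (algebraMap ℚ K (-(1 / 2))) (exp K) * (1 + C (-RatFunc.X) * X) ^ 2 := by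
  rw [DserK, map_neg C, neg_mul, ← sub_eq_add_neg]

lemma rescale_neg_one_DserK : rescale (-1) DserK = -DserK := by
  have h₁ : algebraMap ℚ K (1 / 2) * -1 = algebraMap ℚ K (-(1 / 2)) := by simp
  have h₂ : algebraMap ℚ K (-(1 / 2)) * -1 = algebraMap ℚ K (1 / 2) := by simp
  simp only [DserK, map_sub, map_mul, map_pow, map_add, map_one, rescale_neg_one_X,
    rescale_rescale, rescale_C, h₁, h₂]
  ring

lemma coeff_DserK_of_even {n : ℕ} (hn : Even n) : coeff n DserK = 0 := by
  have h := congrArg (coeff n) rescale_neg_one_DserK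
  rw [coeff_rescale, hn.neg_one_pow, one_mul, map_neg, eq_neg_iff_add_eq_zero] at h
  simpa using h

lemma coeff_one_DserK : coeff 1 DserK = 1 + 4 * RatFunc.X := by
  rw [DserK_eq_rescale_exp_sub, map_sub, coeff_mul_one_add_C_mul_X_sq, coeff_mul_one_add_C_mul_X_sq]
  norm_num [coeff_rescale, coeff_exp]
  ring

lemma coeff_three_DserK :
    coeff 3 DserK = RatFunc.C (1 / 24) + RatFunc.C (1 / 2) * RatFunc.X + RatFunc.X ^ 2 := by
  rw [DserK_eq_rescale_exp_sub, map_sub, coeff_mul_one_add_C_mul_X_sq, coeff_mul_one_add_C_mul_X_sq]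
  norm_num [coeff_rescale, coeff_exp, Nat.factorial]
  ring

lemma coeffLE_DserK : CoeffLE v∞ 1 (exp 2) DserK := by
  have hlin (b : K) (hb : v∞ b ≤ exp 1) : CoeffLE v∞ 1 (exp 1) (1 + C b * X) := by
    have h₀ : CoeffLE v∞ 1 (exp 1) (C 1 * X ^ 0) :=
      coeffLE_C_mul_X_pow (by simpa using one_le_exp_one)
    have h₁ : CoeffLE v∞ 1 (exp 1) (C b * X ^ 1) := coeffLE_C_mul_X_pow (by simpa using hb)
    simpa using h₀.add h₁
  have hterm (c : ℚ) (b : K) (hb : v∞ b ≤ exp 1) :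
      CoeffLE v∞ 1 (exp 2) (rescale (algebraMap ℚ K c) (exp K) * (1 + C b * X) ^ 2) := by
    simpa [← exp_nsmul] using
      (coeffLE_rescale_exp inftyValuation_algebraMap_le_one c).mul ((hlin b hb).pow 2)
  rw [DserK_eq_rescale_exp_sub]
  exact (hterm _ _ (by simp)).sub (hterm _ _ (by simp))

noncomputable def Nser₂ (lam : ℚ) : K⟦X⟧ :=
  (1 - C (algebraMap ℚ K lam / 2) * X) * (1 - C (RatFunc.X ^ 2) * X) + C (4 * RatFunc.X)

noncomputable def Eser₂ : K⟦X⟧ := mk fun n => coeff (2 * n + 1) DserK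

lemma expand_Nser₂ (lam : ℚ) : expand 2 two_ne_zero (Nser₂ lam) = Nser lam := by
  simp [Nser₂, Nser, expand_C, expand_X]

lemma X_mul_expand_Eser₂ : X * expand 2 two_ne_zero Eser₂ = DserK := by
  ext (_ | n)
  · simpa using (coeff_DserK_of_even (n := 0) ⟨0, rfl⟩).symm
  · rw [coeff_succ_X_mul, coeff_expand]
    split_ifs with h
    · obtain ⟨m, rfl⟩ := h
      rw [Nat.mul_div_cancel_left m two_pos, Eser₂, coeff_mk]
    · rw [coeff_DserK_of_even (by rwa [Nat.even_add_one, even_iff_two_dvd])]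

lemma constantCoeff_Eser₂ : constantCoeff Eser₂ = 1 + 4 * RatFunc.X := by
  rw [← coeff_zero_eq_constantCoeff_apply, Eser₂, coeff_mk, coeff_one_DserK]

lemma Fres_eq_coeff (lam : ℚ) (k s : ℕ) :
    Fres lam k s = coeff s (Nser₂ lam ^ k * Eser₂⁻¹) := by
  have hE : constantCoeff Eser₂ ≠ 0 := constantCoeff_Eser₂ ▸ one_add_four_X_ne_zero
  have hden : ((X : K⟦X⟧) : LaurentSeries K) ^ (2 * (s : ℤ)) * (DserK : LaurentSeries K) =
      ((X : K⟦X⟧) : LaurentSeries K) ^ ((2 * s + 1 : ℕ) : ℤ) *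
        (expand 2 two_ne_zero Eser₂ : LaurentSeries K) := by
    rw [← X_mul_expand_Eser₂, PowerSeries.coe_mul, ← mul_assoc, ← zpow_add_one₀ (by simp)]
    push_cast
    ring_nf
  rw [Fres, hden, ← expand_Nser₂, ← map_pow,
    show (-1 : ℤ) = ((2 * s : ℕ) : ℤ) - ((2 * s + 1 : ℕ) : ℤ) by push_cast; ring,
    coeff_coe_div_X_zpow_mul _ _ (by rwa [constantCoeff_expand]), ← expand_inv _ _ hE,
    ← map_mul, coeff_expand_mul]

noncomputable def leadEser₂ : K⟦X⟧ := C (4 * RatFunc.X) + C (RatFunc.X ^ 2) * X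

noncomputable def leadNser₂ : K⟦X⟧ := C (8 * RatFunc.X) - leadEser₂

lemma coeff_leadNser₂_pow_mul_inv {k s : ℕ} (hks : k ≤ s) :
    coeff s (leadNser₂ ^ k * leadEser₂⁻¹) =
      (-1) ^ s * (2 : K) ^ (3 * (k : ℤ) - 2 * (s : ℤ) - 2) *
        RatFunc.X ^ ((k : ℤ) + (s : ℤ) - 1) := by
  have hX : (RatFunc.X : K) ≠ 0 := RatFunc.X_ne_zero
  have h4X : (4 * RatFunc.X : K) ≠ 0 := mul_ne_zero (by norm_num) hX
  rw [leadNser₂, leadEser₂, coeff_pow_C_sub_mul_inv h4X _ _ hks, coeff_inv_C_add_C_mul_X h4X,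
    show 3 * (k : ℤ) - 2 * s - 2 = ((3 * k : ℕ) : ℤ) - ((2 * s + 2 : ℕ) : ℤ) by push_cast; ring,
    show (k : ℤ) + s - 1 = ((k + 2 * s : ℕ) : ℤ) - ((s + 1 : ℕ) : ℤ) by push_cast; ring,
    zpow_sub₀ two_ne_zero, zpow_sub₀ hX]
  simp only [zpow_natCast, pow_add, pow_mul]
  field_simp
  ring

lemma coeffLE_leadEser₂ : CoeffLE v∞ (exp 1) (exp 1) leadEser₂ := by
  have h₀ : CoeffLE v∞ (exp 1) (exp 1) (C (4 * RatFunc.X) * X ^ 0) :=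
    coeffLE_C_mul_X_pow (by simp [inftyValuation_four_mul_X])
  have h₁ : CoeffLE v∞ (exp 1) (exp 1) (C (RatFunc.X ^ 2) * X ^ 1) :=
    coeffLE_C_mul_X_pow (by simp [sq])
  simpa [leadEser₂] using h₀.add h₁

lemma coeffLE_leadNser₂ : CoeffLE v∞ (exp 1) (exp 1) leadNser₂ := by
  have h₀ : CoeffLE v∞ (exp 1) (exp 1) (C (4 * RatFunc.X) * X ^ 0) :=
    coeffLE_C_mul_X_pow (by simp [inftyValuation_four_mul_X])
  have h₁ : CoeffLE v∞ (exp 1) (exp 1) (C (-RatFunc.X ^ 2) * X ^ 1) :=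
    coeffLE_C_mul_X_pow (by simp [sq])
  convert h₀.add h₁ using 1
  simp only [leadNser₂, leadEser₂, map_neg, map_mul, map_ofNat]
  ring

lemma coeffApprox_Nser₂ (lam : ℚ) :
    CoeffApprox v∞ (exp 1) (exp 1) (exp (-1)) (Nser₂ lam) leadNser₂ := by
  refine .of_sub coeffLE_leadNser₂ ?_ exp_neg_one_le_one
  set a : K := algebraMap ℚ K lam / 2
  have ha : v∞ a ≤ 1 := by
    rw [show a = algebraMap ℚ K (lam / 2) by simp [a]]; exact inftyValuation_algebraMap_le_one _
  have h₀ : CoeffLE v∞ (exp 1) 1 (C 1 * X ^ 0) := coeffLE_C_mul_X_pow (by simp)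
  have h₁ : CoeffLE v∞ (exp 1) 1 (C (-a) * X ^ 1) :=
    coeffLE_C_mul_X_pow (by simpa using ha.trans one_le_exp_one)
  have h₂ : CoeffLE v∞ (exp 1) 1 (C (a * RatFunc.X ^ 2) * X ^ 2) :=
    coeffLE_C_mul_X_pow (by simpa using ha)
  rw [← exp_add, add_neg_cancel, exp_zero]
  convert (h₀.add h₁).add h₂ using 1
  simp only [Nser₂, leadNser₂, leadEser₂, map_neg, map_mul, map_one, map_pow, map_ofNat]
  ring

lemma coeffApprox_Eser₂ : CoeffApprox v∞ (exp 1) (exp 1) (exp (-1)) Eser₂ leadEser₂ := by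
  refine .of_sub coeffLE_leadEser₂ ?_ exp_neg_one_le_one
  rw [← exp_add, add_neg_cancel, exp_zero]
  rintro (_ | _ | n)
  · simp [Eser₂, leadEser₂, coeff_one_DserK]
  · have h : coeff 1 (Eser₂ - leadEser₂) =
        RatFunc.C (1 / 24) + RatFunc.C (1 / 2) * RatFunc.X := by
      simp [Eser₂, leadEser₂, coeff_three_DserK]
    rw [h, pow_one, one_mul]
    refine v∞.map_add_le ?_ ?_
    · rw [RatFunc.inftyValuation.C _ (by norm_num)]; exact one_le_exp_one
    · rw [map_mul, RatFunc.inftyValuation.C _ (by norm_num), RatFunc.inftyValuation.X, one_mul]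
  · have h : coeff (n + 2) (Eser₂ - leadEser₂) = coeff (2 * (n + 2) + 1) DserK := by
      rw [map_sub, Eser₂, coeff_mk, leadEser₂, map_add, coeff_C_mul, coeff_X, coeff_C]
      simp
    rw [h]
    refine (coeffLE_DserK _).trans ?_
    simp only [one_pow, mul_one, one_mul, ← exp_nsmul, exp_le_exp, nsmul_eq_mul]
    push_cast
    omega

/-- For `0 ≤ k ≤ s`, the residue `F(k,s)` of `N(Y)^k/(Y^{2s}D(Y))`
satisfies: `F(k,s) - (-1)^s·2^{3k-2s-2}·t^{k+s-1}` is either zero or a rational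
function of `t` of total degree strictly less than `k + s - 1`. (In the paper's
notation, `G(k,s) = (-1)^s 2^{3k-2s-2} t^{k+s-1}` for `k ≤ s`.) -/
theorem Fres_leading_term_of_le (lam : ℚ) (k s : ℕ) (hks : k ≤ s) :
    Fres lam k s - (-1) ^ s * (2 : RatFunc ℚ) ^ (3 * (k : ℤ) - 2 * (s : ℤ) - 2) *
        RatFunc.X ^ ((k : ℤ) + (s : ℤ) - 1) = 0 ∨
      (Fres lam k s - (-1) ^ s * (2 : RatFunc ℚ) ^ (3 * (k : ℤ) - 2 * (s : ℤ) - 2) *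
        RatFunc.X ^ ((k : ℤ) + (s : ℤ) - 1)).intDegree < (k : ℤ) + (s : ℤ) - 1 := by
  have hE₀ : v∞ (constantCoeff Eser₂) = exp 1 := by
    rw [constantCoeff_Eser₂, inftyValuation_one_add_four_X]
  have hlead₀ : v∞ (constantCoeff leadEser₂) = exp 1 := by
    simp [leadEser₂, inftyValuation_four_mul_X]
  have happrox := ((coeffApprox_Nser₂ lam).pow k).mul (coeffApprox_Eser₂.inv exp_ne_zero hE₀ hlead₀)
  have hbound := happrox.sub s
  rw [map_sub, ← Fres_eq_coeff, coeff_leadNser₂_pow_mul_inv hks] at hbound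
  have hexp : exp 1 ^ k * (exp 1)⁻¹ * exp (-1) * exp 1 ^ s = exp ((k : ℤ) + s - 2) := by
    simp only [← exp_nsmul, ← exp_neg, ← exp_add, nsmul_one]
    congr 1
    ring
  rcases RatFunc.eq_zero_or_intDegree_le_of_inftyValuation_le (hbound.trans_eq hexp) with h | h
  · exact .inl h
  · exact .inr (h.trans_lt (by omega))

end
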